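/- Let α = (α_1,…,α_ℓ) be a composition of n and let 0 < k < n. Then in NSym: S_k(R_α) = Σ_β R_{γ^(1)(β)} R_{γ^(2)(β)} ⋯ R_{γ^(r)(β)}, where the sum is over all weak compositions β = (β_1,…,β_ℓ) of k with β_i ≤ α_i for all i and α_i − β_i > 0 for all i < ℓ, and γ^(1)(β),…,γ^(r)(β) is the component list of rowDelete(α,β) in order from bottom to top. (This is the noncommutative Frobenius characteristic of the decomposition of the skew projective module P_{α/(k)}.) -/

import Mathlib

open scoped BigOperators

/-- `NSym`: the free associative ℚ-algebra on generators `H₁, H₂, …` indexed by the positive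
integers, realized as the monoid algebra of the free monoid on `ℕ+` (so the words in
positive integers form a ℚ-basis, the monomial basis `{H_α}`). -/
abbrev NSym : Type := MonoidAlgebra ℚ (FreeMonoid ℕ+)

/-- The complete homogeneous generator `H n` (with the convention `H 0 = 1`). -/
noncomputable def Hgen (n : ℕ) : NSym :=
  if h : 0 < n then MonoidAlgebra.of ℚ (FreeMonoid ℕ+) (FreeMonoid.of ⟨n, h⟩) else 1

/-- `H_α := H_{α₁} ⋯ H_{α_ℓ}`, with `H_∅ = 1`. -/
noncomputable def Hcomp (α : List ℕ) : NSym := (α.map Hgen).prod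

/-- All coarsenings of a composition (each obtained by summing adjacent parts),
enumerated without repetition. -/
def coarsenings : List ℕ → List (List ℕ)
  | [] => [[]]
  | [a] => [[a]]
  | a :: b :: rest =>
      ((coarsenings (b :: rest)).map (a :: ·)) ++ coarsenings ((a + b) :: rest)
termination_by l => l.length

/-- The noncommutative ribbon function `R_α = Σ_{β coarsens α} (−1)^{ℓ(α)−ℓ(β)} H_β`. -/
noncomputable def Rfun (α : List ℕ) : NSym :=
  ((coarsenings α).map (fun β => ((-1 : ℚ) ^ (α.length - β.length)) • Hcomp β)).sum

/-- The value of the skewing operator `S_k` on the basis monomial `H_{a₁}⋯H_{a_ℓ}`: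
`Σ H_{a₁−b₁}⋯H_{a_ℓ−b_ℓ}`, summed over all weak compositions `(b₁,…,b_ℓ)` of `k` with
`bᵢ ≤ aᵢ` for all `i` (factors `H_0 = 1` are omitted). -/
noncomputable def SkwordList (k : ℕ) (a : List ℕ) : NSym :=
  ∑ b ∈ (Finset.univ : Finset (Fin a.length → Fin (k + 1))).filter
      (fun b => (∑ i, ((b i : ℕ))) = k ∧ ∀ i : Fin a.length, (b i : ℕ) ≤ a.getD (i : ℕ) 0),
    Hcomp (List.ofFn (fun i : Fin a.length => a.getD i 0 - (b i : ℕ)))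

/-- The ℚ-linear map `S_k : NSym → NSym` defined on the monomial basis by
`S_k(H_{a₁}⋯H_{a_ℓ}) = Σ H_{a₁−b₁}⋯H_{a_ℓ−b_ℓ}` over weak compositions `b` of `k` with
`bᵢ ≤ aᵢ`; it realizes the skewing operator `L₍k₎^⊥`. -/
noncomputable def Sk (k : ℕ) : NSym →ₗ[ℚ] NSym :=
  Finsupp.lsum ℚ (fun w : FreeMonoid ℕ+ =>
    LinearMap.toSpanSingleton ℚ NSym
      (SkwordList k ((FreeMonoid.toList w).map (fun a : ℕ+ => (a : ℕ))))) ∘ₗ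
    (MonoidAlgebra.coeffLinearEquiv ℚ).toLinearMap

/-- Helper: split a list of pairs `(αⱼ, βⱼ)` into maximal consecutive runs, a new run
starting at the first index and at every index `j` with `βⱼ > 0`.  `cur` is the reversed
current run. -/
def splitRunsGo : List (ℕ × ℕ) → List (ℕ × ℕ) → List (List (ℕ × ℕ))
  | cur, [] => [cur.reverse]
  | cur, q :: rest =>
    if 0 < q.2 then cur.reverse :: splitRunsGo [q] rest else splitRunsGo (q :: cur) rest

/-- Split `(α₁,β₁),…,(α_ℓ,β_ℓ)` into the maximal runs described in `splitRunsGo`. -/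
def splitRuns : List (ℕ × ℕ) → List (List (ℕ × ℕ))
  | [] => []
  | p :: rest => splitRunsGo [p] rest

/-- The component list of `rowDelete(α, β)`: each run `{a,…,b}` with `α_a − β_a > 0`
contributes the composition `(α_a−β_a, α_{a+1}, …, α_b)`, and a run with `α_a − β_a = 0`
contributes nothing.  This is the list, from southwest to northeast, of the connected
ribbon components of the diagram obtained from the ribbon of `α` by deleting the leftmost
`βᵢ` boxes of row `i` for each `i`. -/
def componentList (α β : List ℕ) : List (List ℕ) :=
  (splitRuns (α.zip β)).filterMap (fun run =>
    match run with
    | [] => none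
    | (a, b) :: rest => if a - b = 0 then none else some ((a - b) :: rest.map Prod.fst))

/-! ### Auxiliary machinery -/

section ListHelpers

lemma list_sum_map_neg {α M : Type*} [AddCommGroup M] (l : List α) (f : α → M) :
    (l.map fun x => -f x).sum = -(l.map f).sum := by
  induction l with
  | nil => simp
  | cons a l ih => simp [ih]; abel

lemma list_sum_map_sub {α M : Type*} [AddCommGroup M] (l : List α) (f g : α → M) :
    (l.map fun x => f x - g x).sum = (l.map f).sum - (l.map g).sum := by
  induction l with
  | nil => simp
  | cons a l ih => simp [ih]; abel

lemma list_sum_flatMap {α β M : Type*} [AddCommMonoid M] (l : List α) (g : α → List β)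
    (f : β → M) : ((l.flatMap g).map f).sum = (l.map (fun x => ((g x).map f).sum)).sum := by
  induction l with
  | nil => simp
  | cons a l ih => simp [List.flatMap_cons, ih]

lemma list_range_sum {M : Type*} [AddCommMonoid M] (n : ℕ) (f : ℕ → M) :
    ((List.range n).map f).sum = ∑ j ∈ Finset.range n, f j := by
  induction n with
  | zero => simp
  | succ n ih =>
    rw [List.range_succ, Finset.sum_range_succ, List.map_append, List.sum_append, ih]; simp

lemma getD_ofFn {L : ℕ} (f : Fin L → ℕ) (i : Fin L) : (List.ofFn f).getD (i : ℕ) 0 = f i := by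
  rw [List.getD_eq_getElem _ _ (by simp [i.isLt]), List.getElem_ofFn]

end ListHelpers

section Basics

lemma Hcomp_nil : Hcomp [] = 1 := rfl

lemma Hcomp_cons (a : ℕ) (l : List ℕ) : Hcomp (a :: l) = Hgen a * Hcomp l := by
  simp [Hcomp]

lemma Hgen_zero : Hgen 0 = 1 := by simp [Hgen]

lemma coarsenings_length_le {γ δ : List ℕ} (h : γ ∈ coarsenings δ) : γ.length ≤ δ.length := by
  induction δ using coarsenings.induct generalizing γ with
  | case1 => simp [coarsenings] at h; simp [h]
  | case2 a => simp [coarsenings] at h; simp [h]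
  | case3 a b rest ih1 ih2 =>
    rw [coarsenings] at h
    rcases List.mem_append.1 h with h | h
    · obtain ⟨γ', hγ', rfl⟩ := List.mem_map.1 h
      simpa using ih1 hγ'
    · have := ih2 h
      simp at this ⊢; omega

lemma coarsenings_pos {γ δ : List ℕ} (h : γ ∈ coarsenings δ) (hδ : ∀ a ∈ δ, 0 < a) :
    ∀ a ∈ γ, 0 < a := by
  induction δ using coarsenings.induct generalizing γ with
  | case1 => simp [coarsenings] at h; simp [h]
  | case2 a => simp [coarsenings] at h; subst h; simpa using hδ
  | case3 a b rest ih1 ih2 =>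
    rw [coarsenings] at h
    rcases List.mem_append.1 h with h | h
    · obtain ⟨γ', hγ', rfl⟩ := List.mem_map.1 h
      intro x hx
      rcases List.mem_cons.1 hx with rfl | hx
      · exact hδ x (by simp)
      · exact ih1 hγ' (fun a ha => hδ a (by simp at ha ⊢; tauto)) x hx
    · refine ih2 h ?_
      intro x hx
      rcases List.mem_cons.1 hx with rfl | hx
      · have := hδ a (by simp); omega
      · exact hδ x (by simp [hx])

lemma Rfun_single (x : ℕ) : Rfun [x] = Hgen x := by
  simp [Rfun, coarsenings, Hcomp]

lemma Rfun_cons (a b : ℕ) (rest : List ℕ) :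
    Rfun (a :: b :: rest) = Hgen a * Rfun (b :: rest) - Rfun ((a + b) :: rest) := by
  rw [Rfun, coarsenings]
  rw [List.map_append, List.sum_append, List.map_map]
  have h1 : ((coarsenings (b :: rest)).map
      ((fun β => ((-1 : ℚ) ^ ((a :: b :: rest).length - β.length)) • Hcomp β) ∘ (a :: ·))).sum
      = Hgen a * Rfun (b :: rest) := by
    rw [Rfun, ← List.sum_map_mul_left]
    apply congrArg List.sum
    apply List.map_congr_left
    intro γ hγ
    simp only [Function.comp_apply, Hcomp_cons, List.length_cons]
    rw [Nat.succ_sub_succ, mul_smul_comm]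
  have h2 : ((coarsenings ((a + b) :: rest)).map
      (fun β => ((-1 : ℚ) ^ ((a :: b :: rest).length - β.length)) • Hcomp β)).sum
      = - Rfun ((a + b) :: rest) := by
    rw [Rfun, ← list_sum_map_neg]
    apply congrArg List.sum
    apply List.map_congr_left
    intro γ hγ
    have hle : γ.length ≤ ((a+b) :: rest).length := coarsenings_length_le hγ
    simp only [List.length_cons] at hle ⊢
    rw [show rest.length + 1 + 1 - γ.length = (rest.length + 1 - γ.length) + 1 by omega,
      pow_succ, ← neg_smul]
    ring_nf
  rw [h1, h2, sub_eq_add_neg]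

end Basics

section Comps

/-- All lists of `L` nonnegative integers with sum `s`. -/
def comps : ℕ → ℕ → List (List ℕ)
  | s, 0 => if s = 0 then [[]] else []
  | s, (L+1) => (List.range (s+1)).flatMap fun j => (comps (s-j) L).map (j :: ·)

lemma comps_sum_expand {M : Type*} [AddCommMonoid M] (s L : ℕ) (p : List ℕ → Bool)
    (G : List ℕ → M) :
    (((comps s (L+1)).filter p).map G).sum
      = ∑ j ∈ Finset.range (s+1),
          (((comps (s-j) L).filter (fun l => p (j :: l))).map (fun l => G (j :: l))).sum := by
  rw [comps, List.filter_flatMap, list_sum_flatMap, list_range_sum]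
  apply Finset.sum_congr rfl
  intro j _
  rw [List.filter_map, List.map_map]
  rfl

lemma finsum_eq_comps_sum {M : Type*} [AddCommMonoid M] (k : ℕ) :
    ∀ (L s : ℕ), s ≤ k → ∀ (p : List ℕ → Prop) [DecidablePred p] (G : List ℕ → M),
    (∑ b ∈ (Finset.univ : Finset (Fin L → Fin (k+1))).filter
        (fun b => (∑ i, ((b i : ℕ))) = s ∧ p (List.ofFn fun i => (b i : ℕ))),
        G (List.ofFn fun i => (b i : ℕ)))
      = (((comps s L).filter (fun l => decide (p l))).map G).sum := by
  intro L
  induction L with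
  | zero =>
    intro s hs p _ G
    rw [Finset.sum_filter, Fintype.sum_unique]
    simp only [Finset.univ_eq_empty, Finset.sum_empty, List.ofFn_zero]
    by_cases hs0 : s = 0
    · subst hs0
      by_cases hp : p []
      · simp [comps, hp]
      · simp [comps, hp]
    · rw [if_neg (by tauto)]
      simp [comps, hs0]
  | succ n ih =>
    intro s hs p _ G
    rw [Finset.sum_filter]
    rw [← Equiv.sum_comp (Fin.consEquiv (fun _ : Fin (n+1) => Fin (k+1)))]
    rw [Fintype.sum_prod_type]
    have inner : ∀ j : Fin (k+1),
        (∑ b' : Fin n → Fin (k+1),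
          if ((∑ i, (((Fin.consEquiv (fun _ : Fin (n+1) => Fin (k+1))) (j, b') i : ℕ))) = s
              ∧ p (List.ofFn fun i => (((Fin.consEquiv (fun _ : Fin (n+1) => Fin (k+1))) (j, b')) i : ℕ)))
          then G (List.ofFn fun i => (((Fin.consEquiv (fun _ : Fin (n+1) => Fin (k+1))) (j, b')) i : ℕ)) else 0)
        = if (j : ℕ) ≤ s then
            (((comps (s - j) n).filter (fun l => decide (p ((j:ℕ) :: l)))).map (fun l => G ((j:ℕ) :: l))).sum
          else 0 := by
      intro j
      have hof : ∀ b' : Fin n → Fin (k+1),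
          (List.ofFn fun i => (((Fin.consEquiv (fun _ : Fin (n+1) => Fin (k+1))) (j, b')) i : ℕ))
            = (j : ℕ) :: List.ofFn (fun i => (b' i : ℕ)) := by
        intro b'
        rw [List.ofFn_succ]
        simp [Fin.consEquiv]
      have hsum : ∀ b' : Fin n → Fin (k+1),
          (∑ i, (((Fin.consEquiv (fun _ : Fin (n+1) => Fin (k+1))) (j, b') i : ℕ)))
            = (j : ℕ) + ∑ i, (b' i : ℕ) := by
        intro b'
        rw [Fin.sum_univ_succ]
        simp [Fin.consEquiv]
      by_cases hj : (j : ℕ) ≤ s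
      · rw [if_pos hj, ← ih (s - (j:ℕ)) (le_trans (Nat.sub_le _ _) hs)
            (fun l => p ((j:ℕ) :: l)) (fun l => G ((j:ℕ) :: l))]
        rw [Finset.sum_filter]
        apply Finset.sum_congr rfl
        intro b' _
        rw [hof, hsum]
        congr 1
        simp only [eq_iff_iff]
        constructor
        · rintro ⟨h1, h2⟩; exact ⟨by omega, h2⟩
        · rintro ⟨h1, h2⟩; exact ⟨by omega, h2⟩
      · rw [if_neg hj]
        apply Finset.sum_eq_zero
        intro b' _
        rw [if_neg]
        rintro ⟨h1, -⟩
        rw [hsum] at h1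
        omega
    rw [Finset.sum_congr rfl (fun j _ => inner j)]
    rw [Fin.sum_univ_eq_sum_range (fun j => if j ≤ s then
      (((comps (s - j) n).filter (fun l => decide (p (j :: l)))).map (fun l => G (j :: l))).sum else 0)]
    rw [comps_sum_expand]
    rw [← Finset.sum_subset (Finset.range_subset_range.2 (by omega : s+1 ≤ k+1))]
    · apply Finset.sum_congr rfl
      intro j hj
      rw [if_pos (by simp at hj; omega)]
    · intro j _ hj
      rw [if_neg (by simp at hj; omega)]

end Comps

section SkLemmas

lemma Sk_single (k : ℕ) (w : FreeMonoid ℕ+) (r : ℚ) :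
    Sk k (MonoidAlgebra.single w r)
      = r • SkwordList k ((FreeMonoid.toList w).map (fun a : ℕ+ => (a : ℕ))) := by
  rw [Sk]
  rw [LinearMap.comp_apply, LinearEquiv.coe_coe, MonoidAlgebra.coeffLinearEquiv_apply,
    MonoidAlgebra.coeff_single]
  erw [Finsupp.lsum_single, LinearMap.toSpanSingleton_apply]

lemma Hcomp_single (α : List ℕ) (hα : ∀ a ∈ α, 0 < a) :
    ∃ w : FreeMonoid ℕ+, Hcomp α = MonoidAlgebra.single w 1
      ∧ (FreeMonoid.toList w).map (fun a : ℕ+ => (a : ℕ)) = α := by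
  induction α with
  | nil =>
    exact ⟨1, by rw [← MonoidAlgebra.one_def]; rfl, by simp⟩
  | cons a l ih =>
    obtain ⟨w, hw, hwl⟩ := ih (fun x hx => hα x (by simp [hx]))
    have ha : 0 < a := hα a (by simp)
    refine ⟨FreeMonoid.of ⟨a, ha⟩ * w, ?_, ?_⟩
    · rw [Hcomp_cons, hw, Hgen, dif_pos ha, MonoidAlgebra.of_apply,
        MonoidAlgebra.single_mul_single, mul_one]
    · rw [FreeMonoid.toList_mul, List.map_append, hwl]
      rfl

lemma Sk_Hcomp (k : ℕ) (α : List ℕ) (hα : ∀ a ∈ α, 0 < a) :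
    Sk k (Hcomp α) = SkwordList k α := by
  obtain ⟨w, hw, hwl⟩ := Hcomp_single α hα
  rw [hw, Sk_single, hwl, one_smul]

/-- Pointwise bound condition for the skewing sum, in list form. -/
def ScP (a l : List ℕ) : Prop := ∀ i : Fin a.length, l.getD (i : ℕ) 0 ≤ a.getD (i : ℕ) 0

instance (a : List ℕ) : DecidablePred (ScP a) := fun _ => by unfold ScP; infer_instance

noncomputable def ScG (a : List ℕ) (l : List ℕ) : NSym :=
  Hcomp (List.ofFn fun i : Fin a.length => a.getD (i : ℕ) 0 - l.getD (i : ℕ) 0)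

/-- List-level form of `SkwordList`. -/
noncomputable def Sc (k : ℕ) (a : List ℕ) : NSym :=
  (((comps k a.length).filter (fun l => decide (ScP a l))).map (ScG a)).sum

lemma SkwordList_eq_Sc (k : ℕ) (a : List ℕ) : SkwordList k a = Sc k a := by
  rw [SkwordList, Sc, ← finsum_eq_comps_sum k a.length k le_rfl (ScP a) (ScG a)]
  rw [Finset.sum_filter, Finset.sum_filter]
  apply Finset.sum_congr rfl
  intro b _
  have hiff : (∀ i : Fin a.length, (b i : ℕ) ≤ a.getD (i:ℕ) 0)
      ↔ ScP a (List.ofFn fun i => (b i : ℕ)) := by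
    unfold ScP
    constructor <;> intro h i <;> have := h i <;> simpa [getD_ofFn] using this
  have hG : Hcomp (List.ofFn fun i : Fin a.length => a.getD (i:ℕ) 0 - (b i : ℕ))
      = ScG a (List.ofFn fun i => (b i : ℕ)) := by
    unfold ScG
    have : (fun i : Fin a.length => a.getD (i:ℕ) 0 - (b i : ℕ))
        = fun i : Fin a.length => a.getD (i:ℕ) 0
            - (List.ofFn fun i : Fin a.length => (b i : ℕ)).getD (i:ℕ) 0 := by
      funext i
      rw [getD_ofFn]
    rw [this]
  rw [hG]
  exact if_congr (and_congr Iff.rfl hiff) rfl rfl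

lemma Sc_nil (k : ℕ) : Sc k [] = if k = 0 then 1 else 0 := by
  by_cases h : k = 0
  · subst h
    simp [Sc, comps, ScP, ScG, Hcomp]
  · simp [Sc, comps, h]

lemma ScP_cons (x : ℕ) (t : List ℕ) (j : ℕ) (l : List ℕ) :
    ScP (x :: t) (j :: l) ↔ j ≤ x ∧ ScP t l := by
  unfold ScP
  constructor
  · intro h
    refine ⟨by simpa using h ⟨0, by simp⟩, fun i => ?_⟩
    have := h i.succ
    simpa [Fin.val_succ] using this
  · rintro ⟨h1, h2⟩ i
    match i with
    | ⟨0, _⟩ => simpa using h1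
    | ⟨m+1, hm⟩ =>
      have := h2 ⟨m, by simpa using hm⟩
      simpa using this

lemma ScG_cons (x : ℕ) (t : List ℕ) (j : ℕ) (l : List ℕ) :
    ScG (x :: t) (j :: l) = Hgen (x - j) * ScG t l := by
  unfold ScG
  rw [show (x :: t).length = t.length + 1 from rfl]
  rw [List.ofFn_succ, Hcomp_cons]
  simp [Fin.val_succ]

lemma Sc_cons (k x : ℕ) (t : List ℕ) :
    Sc k (x :: t) = ∑ j ∈ Finset.range (k+1), (if j ≤ x then Hgen (x - j) * Sc (k-j) t else 0) := by
  rw [Sc, show (x :: t).length = t.length + 1 from rfl, comps_sum_expand]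
  apply Finset.sum_congr rfl
  intro j hj
  by_cases hjx : j ≤ x
  · rw [if_pos hjx]
    have hf : (List.filter (fun l => decide (ScP (x :: t) (j :: l))) (comps (k-j) t.length))
        = List.filter (fun l => decide (ScP t l)) (comps (k-j) t.length) := by
      apply List.filter_congr
      intro l _
      simp [ScP_cons, hjx]
    rw [hf, Sc, ← List.sum_map_mul_left]
    congr 1
    apply List.map_congr_left
    intro l _
    rw [ScG_cons]
  · rw [if_neg hjx]
    have hf : (List.filter (fun l => decide (ScP (x :: t) (j :: l))) (comps (k-j) t.length))
        = [] := by
      rw [List.filter_eq_nil_iff]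
      intro l _
      simp [ScP_cons, hjx]
    rw [hf]
    simp

lemma Sk_Hgen_mul (k a : ℕ) (ha : 0 < a) (x : NSym) :
    Sk k (Hgen a * x)
      = ∑ j ∈ Finset.range (k+1), (if j ≤ a then Hgen (a-j) else 0) * Sk (k-j) x := by
  induction x using MonoidAlgebra.induction_linear with
  | zero => simp
  | add f g hf hg =>
    rw [mul_add, map_add, hf, hg, ← Finset.sum_add_distrib]
    apply Finset.sum_congr rfl
    intro j _
    rw [map_add, mul_add]
  | single w r =>
    have h1 : Hgen a * MonoidAlgebra.single w r
        = MonoidAlgebra.single (FreeMonoid.of ⟨a, ha⟩ * w) r := by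
      rw [Hgen, dif_pos ha, MonoidAlgebra.of_apply, MonoidAlgebra.single_mul_single, one_mul]
    have h2 : ((FreeMonoid.toList ((FreeMonoid.of ⟨a, ha⟩ : FreeMonoid ℕ+) * w)).map (fun a : ℕ+ => (a:ℕ)))
        = a :: ((FreeMonoid.toList w).map (fun a : ℕ+ => (a:ℕ))) := by
      rw [FreeMonoid.toList_mul]
      rfl
    rw [h1, Sk_single, h2, SkwordList_eq_Sc, Sc_cons, Finset.smul_sum]
    apply Finset.sum_congr rfl
    intro j _
    rw [Sk_single, SkwordList_eq_Sc]
    by_cases hj : j ≤ a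
    · rw [if_pos hj, if_pos hj, mul_smul_comm]
    · rw [if_neg hj, if_neg hj, smul_zero, zero_mul]

end SkLemmas

section ComponentLemmas

/-- The contribution of one run to the component list. -/
def clRun : List (ℕ × ℕ) → Option (List ℕ)
  | [] => none
  | (a, b) :: rest => if a - b = 0 then none else some ((a - b) :: rest.map Prod.fst)

lemma componentList_eq (α β : List ℕ) :
    componentList α β = (splitRuns (α.zip β)).filterMap clRun := rfl

lemma splitRunsGo_eq (rest : List (ℕ × ℕ)) : ∀ cur, splitRunsGo cur rest
    = (cur.reverse ++ (splitRunsGo [] rest).headI) :: (splitRunsGo [] rest).tail := by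
  induction rest with
  | nil => intro cur; simp [splitRunsGo]
  | cons q rest ih =>
    intro cur
    by_cases hq : 0 < q.2
    · simp [splitRunsGo, hq]
    · rw [splitRunsGo, if_neg hq, ih (q :: cur),
        show splitRunsGo [] (q :: rest) = splitRunsGo [q] rest by rw [splitRunsGo, if_neg hq],
        ih [q]]
      simp

lemma componentList_cons (x y : ℕ) (ρ δ : List ℕ) :
    componentList (x :: ρ) (y :: δ) =
      (if x - y = 0 then [] else [(x - y) :: ((splitRunsGo [] (ρ.zip δ)).headI.map Prod.fst)])
        ++ ((splitRunsGo [] (ρ.zip δ)).tail).filterMap clRun := by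
  rw [componentList_eq, List.zip_cons_cons, splitRuns, splitRunsGo_eq _ [(x, y)],
    List.filterMap_cons]
  by_cases h : x - y = 0
  · rw [if_pos h]
    rw [show clRun (((x, y) :: []).reverse ++ (splitRunsGo [] (ρ.zip δ)).headI)
        = none by simp [clRun, h]]
    simp
  · rw [if_neg h]
    rw [show clRun (((x, y) :: []).reverse ++ (splitRunsGo [] (ρ.zip δ)).headI)
        = some ((x - y) :: ((splitRunsGo [] (ρ.zip δ)).headI.map Prod.fst)) by
      simp [clRun, h]]
    simp

/-- Head of the component containing the first row depends only on the difference. -/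
lemma headGo_pos (c m : ℕ) (z : List (ℕ × ℕ)) (hm : 0 < m) :
    splitRunsGo [] ((c, m) :: z) = [] :: splitRunsGo [(c, m)] z := by
  rw [splitRunsGo, if_pos hm]
  rfl

lemma headGo_zero (c : ℕ) (z : List (ℕ × ℕ)) :
    splitRunsGo [] ((c, 0) :: z)
      = ((c, 0) :: (splitRunsGo [] z).headI) :: (splitRunsGo [] z).tail := by
  rw [splitRunsGo, if_neg (by simp), splitRunsGo_eq z [(c, 0)]]
  rfl

end ComponentLemmas

section TcL

/-- Admissibility of a deletion vector: `βᵢ ≤ αᵢ` everywhere and `βᵢ < αᵢ` except possibly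
in the last row. -/
def okP (α l : List ℕ) : Prop :=
  (∀ i : Fin α.length, l.getD (i : ℕ) 0 ≤ α.getD (i : ℕ) 0)
    ∧ ∀ i : Fin α.length, (i : ℕ) + 1 < α.length → l.getD (i : ℕ) 0 < α.getD (i : ℕ) 0

instance (α : List ℕ) : DecidablePred (okP α) := fun _ => by unfold okP; infer_instance

/-- List-level form of the right-hand side of the theorem. -/
noncomputable def TcL (k : ℕ) (α : List ℕ) : NSym :=
  (((comps k α.length).filter (fun l => decide (okP α l))).map
    (fun l => ((componentList α l).map Rfun).prod)).sum

lemma okP_cons (x : ℕ) (ρ : List ℕ) (j : ℕ) (l : List ℕ) :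
    okP (x :: ρ) (j :: l) ↔ ((j ≤ x ∧ (0 < ρ.length → j < x)) ∧ okP ρ l) := by
  unfold okP
  constructor
  · rintro ⟨h1, h2⟩
    refine ⟨⟨by simpa using h1 ⟨0, by simp⟩, fun hρ => by simpa using h2 ⟨0, by simp⟩ (by simp; omega)⟩,
      fun i => ?_, fun i hi => ?_⟩
    · have := h1 i.succ
      simpa [Fin.val_succ] using this
    · have := h2 i.succ (by simpa [Fin.val_succ] using Nat.succ_lt_succ hi)
      simpa [Fin.val_succ] using this
  · rintro ⟨⟨h1, h2⟩, h3, h4⟩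
    constructor
    · intro i
      match i with
      | ⟨0, _⟩ => simpa using h1
      | ⟨m+1, hm⟩ =>
        have := h3 ⟨m, by simpa using hm⟩
        simpa using this
    · intro i hi
      match i with
      | ⟨0, _⟩ =>
        simp only [List.length_cons] at hi
        have := h2 (by simpa using (by omega : 0 < ρ.length))
        simpa using this
      | ⟨m+1, hm⟩ =>
        have := h4 ⟨m, by simpa using hm⟩ (by simp at hi ⊢; omega)
        simpa using this

lemma okP_expand (x : ℕ) (ρ : List ℕ) (s : ℕ) (G : List ℕ → NSym) :
    (((comps s ((x :: ρ).length)).filter (fun l => decide (okP (x :: ρ) l))).map G).sum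
      = ∑ m ∈ Finset.range (s+1), if (m ≤ x ∧ (0 < ρ.length → m < x)) then
          (((comps (s-m) ρ.length).filter (fun l => decide (okP ρ l))).map
            (fun l => G (m :: l))).sum
        else 0 := by
  rw [show (x :: ρ).length = ρ.length + 1 from rfl, comps_sum_expand]
  apply Finset.sum_congr rfl
  intro m _
  by_cases hm : m ≤ x ∧ (0 < ρ.length → m < x)
  · rw [if_pos hm]
    have hfe : List.filter (fun l => decide (okP (x :: ρ) (m :: l))) (comps (s-m) ρ.length)
        = List.filter (fun l => decide (okP ρ l)) (comps (s-m) ρ.length) :=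
      List.filter_congr (fun l _ => by simp only [decide_eq_decide, okP_cons]; tauto)
    rw [hfe]
  · rw [if_neg hm]
    have hf : (List.filter (fun l => decide (okP (x :: ρ) (m :: l))) (comps (s-m) ρ.length))
        = [] := by
      rw [List.filter_eq_nil_iff]
      intro l _
      simp only [decide_eq_true_eq, okP_cons]
      tauto
    rw [hf]
    simp

lemma TcL_nil (k : ℕ) : TcL k [] = if k = 0 then 1 else 0 := by
  by_cases h : k = 0
  · subst h
    simp [TcL, comps, okP, componentList, splitRuns]
  · simp [TcL, comps, h]

end TcL

section PointwiseComponents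

lemma prodCL_top (a c j m : ℕ) (rest l : List ℕ) (hm : 0 < m) :
    ((componentList (a :: c :: rest) (j :: m :: l)).map Rfun).prod
      = Hgen (a - j) * ((componentList (c :: rest) (m :: l)).map Rfun).prod := by
  rw [componentList_cons a j (c :: rest) (m :: l), List.zip_cons_cons,
    headGo_pos c m (rest.zip l) hm]
  rw [componentList_eq, List.zip_cons_cons, splitRuns]
  simp only [List.headI, List.tail_cons, List.map_nil]
  by_cases h : a - j = 0
  · rw [if_pos h, h, Hgen_zero, List.nil_append, one_mul]
  · rw [if_neg h]
    simp only [List.singleton_append, List.map_cons, List.prod_cons, Rfun_single]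

lemma prodCL_zero (a c j : ℕ) (rest l : List ℕ) (hj : j < a) (hc : 0 < c) :
    ((componentList (a :: c :: rest) (j :: 0 :: l)).map Rfun).prod
      = Hgen (a - j) * ((componentList (c :: rest) (0 :: l)).map Rfun).prod
        - ((componentList ((a+c) :: rest) (j :: l)).map Rfun).prod := by
  rw [componentList_cons a j (c :: rest) (0 :: l), componentList_cons c 0 rest l,
    componentList_cons (a+c) j rest l]
  rw [List.zip_cons_cons, headGo_zero c (rest.zip l)]
  simp only [List.headI, List.tail_cons, List.map_cons]
  have h1 : a - j ≠ 0 := by omega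
  have h2 : c - 0 ≠ 0 := by omega
  have h3 : a + c - j ≠ 0 := by omega
  rw [if_neg h1, if_neg h2, if_neg h3]
  simp only [List.singleton_append, List.map_cons, List.prod_cons, Nat.sub_zero]
  rw [Rfun_cons, show a - j + c = a + c - j by omega, sub_mul, mul_assoc]

lemma prodCL_shift (a c m : ℕ) (rest l : List ℕ) :
    ((componentList ((a+c) :: rest) ((a+m) :: l)).map Rfun).prod
      = ((componentList (c :: rest) (m :: l)).map Rfun).prod := by
  rw [componentList_cons, componentList_cons, Nat.add_sub_add_left]

end PointwiseComponents

section SumFunctions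

noncomputable def Wfun (c : ℕ) (rest : List ℕ) (s m : ℕ) : NSym :=
  (((comps s rest.length).filter (fun l => decide (okP rest l))).map
    (fun l => ((componentList (c :: rest) (m :: l)).map Rfun).prod)).sum

noncomputable def Ufun (a c : ℕ) (rest : List ℕ) (s j m : ℕ) : NSym :=
  (((comps s rest.length).filter (fun l => decide (okP rest l))).map
    (fun l => ((componentList (a :: c :: rest) (j :: m :: l)).map Rfun).prod)).sum

lemma TcL_cons_expand (x : ℕ) (ρ : List ℕ) (k : ℕ) :
    TcL k (x :: ρ) = ∑ m ∈ Finset.range (k+1),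
      if (m ≤ x ∧ (0 < ρ.length → m < x)) then Wfun x ρ (k-m) m else 0 := by
  rw [TcL, okP_expand]
  rfl

lemma TcL_cons2_expand (a c : ℕ) (rest : List ℕ) (k : ℕ) :
    TcL k (a :: c :: rest) = ∑ j ∈ Finset.range (k+1),
      if j < a then
        (∑ m ∈ Finset.range (k-j+1),
          if (m ≤ c ∧ (0 < rest.length → m < c)) then Ufun a c rest (k-j-m) j m else 0)
      else 0 := by
  rw [TcL, okP_expand]
  apply Finset.sum_congr rfl
  intro j _
  by_cases hj : j < a
  · rw [if_pos (show (j ≤ a ∧ (0 < (c :: rest).length → j < a)) from ⟨by omega, fun _ => hj⟩),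
      if_pos hj, okP_expand]
    rfl
  · rw [if_neg (show ¬(j ≤ a ∧ (0 < (c :: rest).length → j < a)) from
      fun hg => hj (hg.2 (by simp))), if_neg hj]

lemma Ufun_pos (a c : ℕ) (rest : List ℕ) (s j m : ℕ) (hm : 0 < m) :
    Ufun a c rest s j m = Hgen (a - j) * Wfun c rest s m := by
  rw [Ufun, Wfun, ← List.sum_map_mul_left]
  congr 1
  apply List.map_congr_left
  intro l _
  exact prodCL_top a c j m rest l hm

lemma Ufun_zero (a c : ℕ) (rest : List ℕ) (s j : ℕ) (hj : j < a) (hc : 0 < c) :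
    Ufun a c rest s j 0 = Hgen (a - j) * Wfun c rest s 0 - Wfun (a+c) rest s j := by
  rw [Ufun, Wfun, Wfun, ← List.sum_map_mul_left, ← list_sum_map_sub]
  congr 1
  apply List.map_congr_left
  intro l _
  exact prodCL_zero a c j rest l hj hc

lemma Wfun_shift (a c : ℕ) (rest : List ℕ) (s m : ℕ) :
    Wfun (a+c) rest s (a+m) = Wfun c rest s m := by
  rw [Wfun, Wfun]
  congr 1
  apply List.map_congr_left
  intro l _
  exact prodCL_shift a c m rest l

end SumFunctions

section KeyIdentity

/-- Abstract sum-shuffling identity underlying the inductive step. -/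
lemma sumShuffle (a c k : ℕ) (P Q : ℕ → Prop) [DecidablePred P] [DecidablePred Q]
    (W V : ℕ → ℕ → NSym) (U : ℕ → ℕ → ℕ → NSym)
    (hP0 : P 0)
    (hQlt : ∀ j, j < a → Q j)
    (hQshift : ∀ m, Q (a + m) ↔ P m)
    (hU_pos : ∀ s j m, 0 < m → U s j m = Hgen (a-j) * W s m)
    (hU_zero : ∀ s j, j < a → U s j 0 = Hgen (a-j) * W s 0 - V s j)
    (hshift : ∀ s m, V s (a+m) = W s m) :
    (∑ j ∈ Finset.range (k+1), (if j ≤ a then Hgen (a-j) else 0)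
        * (∑ m ∈ Finset.range (k-j+1), if P m then W (k-j-m) m else 0))
      = (∑ j ∈ Finset.range (k+1),
          if j < a then
            (∑ m ∈ Finset.range (k-j+1), if P m then U (k-j-m) j m else 0)
          else 0)
        + (∑ j ∈ Finset.range (k+1), if Q j then V (k-j) j else 0) := by
  have hHWj : ∀ j, j < a →
      Hgen (a-j) * (∑ m ∈ Finset.range (k-j+1), if P m then W (k-j-m) m else 0)
        = (∑ m ∈ Finset.range (k-j+1), if P m then U (k-j-m) j m else 0)
          + V (k-j) j := by
    intro j hj
    rw [Finset.mul_sum]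
    have hterm : ∀ m ∈ Finset.range (k-j+1),
        (Hgen (a-j) * (if P m then W (k-j-m) m else 0))
          = (if P m then U (k-j-m) j m else 0)
            + (if m = 0 then V (k-j) j else 0) := by
      intro m _
      by_cases hm : m = 0
      · subst hm
        rw [if_pos hP0, if_pos hP0, if_pos rfl, Nat.sub_zero, hU_zero (k-j) j hj]
        abel
      · rw [if_neg hm, add_zero, mul_ite, mul_zero]
        by_cases hg : P m
        · rw [if_pos hg, if_pos hg, hU_pos (k-j-m) j m (by omega)]
        · rw [if_neg hg, if_neg hg]
    rw [Finset.sum_congr rfl hterm, Finset.sum_add_distrib]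
    congr 1
    rw [Finset.sum_ite_eq' (Finset.range (k-j+1)) 0 (fun _ => V (k-j) j)]
    rw [if_pos (by simp)]
  -- split LHS at j < a versus j = a
  have hsplitB : ∀ j ∈ Finset.range (k+1),
      ((if j ≤ a then Hgen (a-j) else 0)
          * (∑ m ∈ Finset.range (k-j+1), if P m then W (k-j-m) m else 0))
        = ((if j < a then
              ((∑ m ∈ Finset.range (k-j+1), if P m then U (k-j-m) j m else 0)
                + V (k-j) j)
            else 0)
          + (if j = a then
              Hgen (a-j) * (∑ m ∈ Finset.range (k-j+1), if P m then W (k-j-m) m else 0)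
            else 0)) := by
    intro j _
    rcases lt_trichotomy j a with h | h | h
    · rw [if_pos (le_of_lt h), if_pos h, if_neg (by omega), add_zero, hHWj j h]
    · subst h
      rw [if_pos le_rfl, if_neg (lt_irrefl _), if_pos rfl, zero_add]
    · rw [if_neg (show ¬ j ≤ a by omega), if_neg (show ¬ j < a by omega),
        if_neg (show ¬ j = a by omega)]
      simp
  rw [Finset.sum_congr rfl hsplitB, Finset.sum_add_distrib]
  -- the j = a piece
  have hjaeq : (∑ j ∈ Finset.range (k+1), if j = a then
        Hgen (a-j) * (∑ m ∈ Finset.range (k-j+1), if P m then W (k-j-m) m else 0) else 0)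
      = if a ≤ k then
          (∑ m ∈ Finset.range (k-a+1), if P m then W (k-a-m) m else 0)
        else 0 := by
    rw [Finset.sum_ite_eq' (Finset.range (k+1)) a
      (fun j => Hgen (a-j) * (∑ m ∈ Finset.range (k-j+1), if P m then W (k-j-m) m else 0))]
    by_cases hak : a ≤ k
    · rw [if_pos (by simp [Nat.lt_succ_iff, hak]), if_pos hak, Nat.sub_self, Hgen_zero, one_mul]
    · rw [if_neg (by simp [Nat.lt_succ_iff, hak]), if_neg hak]
  rw [hjaeq]
  -- split the ite (j < a) (X + V) into two sums
  have hsplit2 : ∀ j ∈ Finset.range (k+1),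
      (if j < a then
          ((∑ m ∈ Finset.range (k-j+1), if P m then U (k-j-m) j m else 0) + V (k-j) j)
        else 0)
        = ((if j < a then (∑ m ∈ Finset.range (k-j+1), if P m then U (k-j-m) j m else 0) else 0)
          + (if j < a then V (k-j) j else 0)) := by
    intro j _
    by_cases hj : j < a
    · rw [if_pos hj, if_pos hj, if_pos hj]
    · rw [if_neg hj, if_neg hj, if_neg hj, add_zero]
  rw [Finset.sum_congr rfl hsplit2, Finset.sum_add_distrib]
  -- identify the V-pieces with the Q-gated sum
  have hC : (∑ j ∈ Finset.range (k+1), if Q j then V (k-j) j else 0)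
      = (∑ j ∈ Finset.range (k+1), if j < a then V (k-j) j else 0)
        + (if a ≤ k then
            (∑ m ∈ Finset.range (k-a+1), if P m then W (k-a-m) m else 0)
          else 0) := by
    have hsplitC : ∀ j ∈ Finset.range (k+1),
        (if Q j then V (k-j) j else 0)
          = ((if j < a then V (k-j) j else 0)
            + (if a ≤ j then (if Q j then V (k-j) j else 0) else 0)) := by
      intro j _
      by_cases hj : j < a
      · rw [if_pos (hQlt j hj), if_pos hj, if_neg (show ¬ a ≤ j by omega), add_zero]
      · rw [if_neg hj, if_pos (show a ≤ j by omega), zero_add]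
    rw [Finset.sum_congr rfl hsplitC, Finset.sum_add_distrib]
    congr 1
    have hfilter : (∑ j ∈ Finset.range (k+1),
          if a ≤ j then (if Q j then V (k-j) j else 0) else 0)
        = ∑ j ∈ Finset.Ico a (k+1), (if Q j then V (k-j) j else 0) := by
      rw [← Finset.sum_filter]
      congr 1
      ext j
      simp only [Finset.mem_filter, Finset.mem_range, Finset.mem_Ico]
      omega
    rw [hfilter, Finset.sum_Ico_eq_sum_range]
    by_cases hak : a ≤ k
    · rw [if_pos hak, show k + 1 - a = k - a + 1 by omega]
      apply Finset.sum_congr rfl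
      intro m _
      by_cases hg : P m
      · rw [if_pos ((hQshift m).2 hg), if_pos hg,
          show k - (a + m) = k - a - m by omega, hshift]
      · rw [if_neg (fun hq => hg ((hQshift m).1 hq)), if_neg hg]
    · rw [if_neg hak, show k + 1 - a = 0 by omega]
      simp
  rw [hC]
  abel

lemma keyIdentity (a c : ℕ) (rest : List ℕ) (hc : 0 < c) (k : ℕ) :
    (∑ j ∈ Finset.range (k+1), (if j ≤ a then Hgen (a-j) else 0) * TcL (k-j) (c :: rest))
      = TcL k (a :: c :: rest) + TcL k ((a+c) :: rest) := by
  have hB : ∀ j ∈ Finset.range (k+1),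
      ((if j ≤ a then Hgen (a-j) else 0) * TcL (k-j) (c :: rest))
        = ((if j ≤ a then Hgen (a-j) else 0)
          * (∑ m ∈ Finset.range (k-j+1),
              if (m ≤ c ∧ (0 < rest.length → m < c)) then Wfun c rest (k-j-m) m else 0)) := by
    intro j _
    rw [TcL_cons_expand]
  rw [Finset.sum_congr rfl hB, TcL_cons2_expand, TcL_cons_expand]
  exact sumShuffle a c k
    (fun m => (m ≤ c ∧ (0 < rest.length → m < c)))
    (fun j => (j ≤ a + c ∧ (0 < rest.length → j < a + c)))
    (Wfun c rest) (Wfun (a+c) rest) (Ufun a c rest)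
    (by constructor <;> omega)
    (fun j hj => by constructor <;> omega)
    (fun m => by constructor <;> (intro h; constructor <;> omega))
    (fun s j m hm => Ufun_pos a c rest s j m hm)
    (fun s j hj => Ufun_zero a c rest s j hj hc)
    (fun s m => Wfun_shift a c rest s m)

end KeyIdentity

section MainInduction

lemma prodCL_singleton (x m : ℕ) :
    ((componentList [x] [m]).map Rfun).prod = Hgen (x - m) := by
  rw [show ([m] : List ℕ) = m :: [] from rfl, componentList_cons x m [] []]
  rw [show (List.zip ([] : List ℕ) ([] : List ℕ)) = [] from rfl,
    show splitRunsGo [] ([] : List (ℕ × ℕ)) = [[]] from rfl]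
  simp only [List.headI, List.tail_cons, List.map_nil, List.filterMap_nil, List.append_nil]
  by_cases h : x - m = 0
  · rw [if_pos h, h, Hgen_zero]
    rfl
  · rw [if_neg h]
    simp [Rfun_single]

lemma TcL_single (k x : ℕ) : TcL k [x] = if k ≤ x then Hgen (x - k) else 0 := by
  rw [TcL, okP_expand x [] k (fun l => ((componentList [x] l).map Rfun).prod)]
  have hok : (decide (okP [] []) = true) :=
    decide_eq_true ⟨fun i => i.elim0, fun i => i.elim0⟩
  have hinner : ∀ m, (((comps (k-m) (([]:List ℕ).length)).filter
        (fun l => decide (okP [] l))).map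
      (fun l => ((componentList [x] (m :: l)).map Rfun).prod)).sum
      = if k - m = 0 then Hgen (x - m) else 0 := by
    intro m
    by_cases h : k - m = 0
    · rw [show (([]:List ℕ).length) = 0 from rfl, h, if_pos rfl,
        show comps 0 0 = [[]] from rfl]
      simp [hok, prodCL_singleton]
    · rw [if_neg h, show comps (k-m) (([]:List ℕ).length) = [] by
        rw [show (([]:List ℕ).length) = 0 from rfl, comps]; simp [h]]
      simp
  have h0 : ∀ j ∈ Finset.range (k+1), j ≠ k →
      (if (j ≤ x ∧ (0 < ([] : List ℕ).length → j < x)) then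
        (((comps (k-j) (([]:List ℕ).length)).filter (fun l => decide (okP [] l))).map
          (fun l => ((componentList [x] (j :: l)).map Rfun).prod)).sum else 0) = 0 := by
    intro j hj hne
    rw [hinner j, if_neg (show ¬ (k - j = 0) by simp at hj; omega)]
    simp
  rw [Finset.sum_eq_single k h0 (fun h => absurd (Finset.self_mem_range_succ k) h)]
  rw [hinner k, Nat.sub_self, if_pos rfl]
  by_cases hkx : k ≤ x
  · rw [if_pos (⟨hkx, by simp⟩ : (k ≤ x ∧ (0 < ([] : List ℕ).length → k < x))), if_pos hkx]
  · rw [if_neg (show ¬(k ≤ x ∧ (0 < ([] : List ℕ).length → k < x)) by tauto), if_neg hkx]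

lemma mainLemma : ∀ (L : ℕ) (α : List ℕ), α.length ≤ L → (∀ a ∈ α, 0 < a) → ∀ k,
    Sk k (Rfun α) = TcL k α := by
  intro L
  induction L with
  | zero =>
    intro α hlen hpos k
    have hα : α = [] := List.length_eq_zero_iff.mp (Nat.le_zero.mp hlen)
    subst hα
    have hR : Rfun ([] : List ℕ) = Hcomp [] := by simp [Rfun, coarsenings, Hcomp]
    rw [hR, Sk_Hcomp _ _ (by simp), SkwordList_eq_Sc, Sc_nil, TcL_nil]
  | succ L ih =>
    intro α hlen hpos k
    rcases α with _ | ⟨a, _ | ⟨c, rest⟩⟩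
    · exact ih [] (by simp) hpos k
    · have hx : 0 < a := hpos a (by simp)
      have hR : Rfun [a] = Hcomp [a] := by rw [Rfun_single]; simp [Hcomp]
      rw [hR, Sk_Hcomp _ _ (by simpa using hx), SkwordList_eq_Sc, Sc_cons, TcL_single]
      have h0 : ∀ j ∈ Finset.range (k+1), j ≠ k →
          (if j ≤ a then Hgen (a-j) * Sc (k-j) [] else 0) = 0 := by
        intro j hj hne
        have hne' : k - j ≠ 0 := by simp at hj; omega
        rw [Sc_nil, if_neg hne', mul_zero, ite_self]
      rw [Finset.sum_eq_single k h0 (fun h => absurd (Finset.self_mem_range_succ k) h)]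
      rw [Sc_nil, Nat.sub_self, if_pos rfl, mul_one]
    · have ha : 0 < a := hpos a (by simp)
      have hc : 0 < c := hpos c (by simp)
      have hpos' : ∀ y ∈ c :: rest, 0 < y := fun y hy => hpos y (by simp at hy ⊢; tauto)
      have hposM : ∀ y ∈ (a+c) :: rest, 0 < y := by
        intro y hy
        rcases List.mem_cons.1 hy with rfl | hy
        · omega
        · exact hpos y (by simp [hy])
      have hlen' : (c :: rest).length ≤ L := by simp at hlen ⊢; omega
      have hlenM : ((a+c) :: rest).length ≤ L := by simp at hlen ⊢; omega
      rw [Rfun_cons, map_sub, Sk_Hgen_mul k a ha, ih _ hlenM hposM k]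
      rw [Finset.sum_congr rfl (fun j _ => by rw [ih _ hlen' hpos' (k-j)])]
      rw [keyIdentity a c rest hc k]
      abel

end MainInduction

/-- for a composition `α ⊨ n` and `0 < k < n`,
`S_k(R_α) = Σ_β R_{γ⁽¹⁾(β)} ⋯ R_{γ⁽ʳ⁾(β)}` in `NSym`, the sum over all weak compositions
`β = (β₁,…,β_ℓ)` of `k` with `βᵢ ≤ αᵢ` for all `i` and `αᵢ − βᵢ > 0` for all `i < ℓ`,
where `γ⁽¹⁾(β),…,γ⁽ʳ⁾(β)` is the component list of `rowDelete(α,β)` in order from bottom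
to top. -/
theorem skew_by_row_of_ribbon (n k : ℕ) (hk : 0 < k) (hkn : k < n)
    (α : List ℕ) (hαs : α.sum = n) (hαp : ∀ a ∈ α, 0 < a) :
    Sk k (Rfun α)
      = ∑ b ∈ (Finset.univ : Finset (Fin α.length → Fin (k + 1))).filter
            (fun b => (∑ i, ((b i : ℕ))) = k ∧ (∀ i : Fin α.length, (b i : ℕ) ≤ α.getD (i : ℕ) 0)
              ∧ ∀ i : Fin α.length, (i : ℕ) + 1 < α.length → (b i : ℕ) < α.getD (i : ℕ) 0),
          ((componentList α (List.ofFn (fun i => (b i : ℕ)))).map Rfun).prod := by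
  have hmain := mainLemma α.length α le_rfl hαp k
  rw [hmain, TcL,
    ← finsum_eq_comps_sum k α.length k le_rfl (okP α)
      (fun l => ((componentList α l).map Rfun).prod)]
  rw [Finset.sum_filter, Finset.sum_filter]
  apply Finset.sum_congr rfl
  intro b _
  have hiff : okP α (List.ofFn fun i => (b i : ℕ))
      ↔ ((∀ i : Fin α.length, (b i : ℕ) ≤ α.getD (i:ℕ) 0)
        ∧ ∀ i : Fin α.length, (i:ℕ)+1 < α.length → (b i : ℕ) < α.getD (i:ℕ) 0) := by
    unfold okP
    constructor
    · rintro ⟨h1, h2⟩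
      exact ⟨fun i => by have := h1 i; rwa [getD_ofFn] at this,
             fun i hi => by have := h2 i hi; rwa [getD_ofFn] at this⟩
    · rintro ⟨h1, h2⟩
      exact ⟨fun i => by rw [getD_ofFn]; exact h1 i,
             fun i hi => by rw [getD_ofFn]; exact h2 i hi⟩
  exact if_congr (and_congr Iff.rfl hiff) rfl rfl
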